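/- Let H_n^λ (n = 2k+2) be a twisted Heisenberg algebra over an algebraically closed field of characteristic zero, graded by an abelian group G, and let u' be a homogeneous element with u' ∉ [L,L] of degree h ∈ G. Then h has finite order in G. -/

import Mathlib

/-!
If `h` had infinite order, `ad u'` would shift degrees by `h` through pairwise distinct
degrees, so on a finite-dimensional graded space it would kill every homogeneous element
after finitely many steps and hence be nilpotent. But `u' ∉ [L, L]` means that `u'` has a
nonzero `u`-coordinate `c`, and then `ad u'` maps `e_i + ê_i` to `c λ_i (e_i + ê_i)` modulo
the centre `F z`, which is killed by `ad u'`; so `ad u'` has the nonzero eigenvalue `c λ_i`.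
-/

/-- Index type for the standard basis `{z, u, e_i, ê_i}` of the twisted
Heisenberg algebra `H_n^λ`, `n = 2k+2`. -/
abbrev TwIdx (k : ℕ) := Unit ⊕ Unit ⊕ (Fin k × Bool)

/-- The pairs of indices of basis elements of `H_n^λ` with nonzero bracket:
`(e_i, ê_i)`, `(ê_i, e_i)`, `(u, e_i)`, `(e_i, u)`, `(u, ê_i)`, `(ê_i, u)`. -/
def TwPair {k : ℕ} (p q : TwIdx k) : Prop :=
  ∃ i : Fin k, ∃ s : Bool,
    (p = Sum.inr (Sum.inr (i, s)) ∧ q = Sum.inr (Sum.inr (i, !s))) ∨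
    (p = Sum.inr (Sum.inl ()) ∧ q = Sum.inr (Sum.inr (i, s))) ∨
    (p = Sum.inr (Sum.inr (i, s)) ∧ q = Sum.inr (Sum.inl ()))

open Module Submodule

section Graded

variable {F M G : Type*} [Field F] [AddCommGroup M] [Module F M] [AddCommGroup G]
  {Lg : G → Submodule F M} {A : End F M} {h : G}

theorem pow_apply_mem_of_forall_mem (hA : ∀ g, ∀ x ∈ Lg g, A x ∈ Lg (h + g)) {g : G} {x : M}
    (hx : x ∈ Lg g) (t : ℕ) : (A ^ t) x ∈ Lg (t • h + g) := by
  induction t with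
  | zero => simpa using hx
  | succ t ih =>
    rw [pow_succ', End.mul_apply, succ_nsmul', add_assoc]
    exact hA _ _ ih

theorem exists_pow_apply_eq_zero_of_not_isOfFinAddOrder [Module.Finite F M] (hind : iSupIndep Lg)
    (hA : ∀ g, ∀ x ∈ Lg g, A x ∈ Lg (h + g)) (hh : ¬IsOfFinAddOrder h) {g : G} {x : M}
    (hx : x ∈ Lg g) : ∃ t : ℕ, (A ^ t) x = 0 := by
  by_contra! hne
  have hdeg : Function.Injective fun t : ℕ => t • h + g :=
    (add_left_injective g).comp (injective_nsmul_iff_not_isOfFinAddOrder.mpr hh)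
  exact Module.Finite.not_linearIndependent_of_infinite _
    ((hind.comp hdeg).linearIndependent _ (pow_apply_mem_of_forall_mem hA hx) hne)

theorem isNilpotent_of_not_isOfFinAddOrder [Module.Finite F M] (hind : iSupIndep Lg)
    (htop : ⨆ g, Lg g = ⊤) (hA : ∀ g, ∀ x ∈ Lg g, A x ∈ Lg (h + g))
    (hh : ¬IsOfFinAddOrder h) : IsNilpotent A := by
  refine End.isNilpotent_iff_of_finite.mpr fun m => ?_
  refine iSup_induction Lg (motive := fun m => ∃ t : ℕ, (A ^ t) m = 0) (htop ▸ mem_top : m ∈ ⨆ g, Lg g)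
    (fun g x hx => exists_pow_apply_eq_zero_of_not_isOfFinAddOrder hind hA hh hx) ⟨0, map_zero _⟩ ?_
  rintro x y ⟨s, hs⟩ ⟨t, ht⟩
  refine ⟨s + t, ?_⟩
  rw [map_add, End.pow_map_zero_of_le (Nat.le_add_right s t) hs,
    End.pow_map_zero_of_le (Nat.le_add_left t s) ht, add_zero]

end Graded

theorem Module.End.hasEigenvalue_of_sub_smul_mem_span_singleton {F M : Type*} [Field F]
    [AddCommGroup M] [Module F M] {A : End F M} {μ : F} (hμ : μ ≠ 0) {x z : M}
    (hz : A z = 0) (hxz : x ∉ F ∙ z) (hx : A x - μ • x ∈ F ∙ z) : A.HasEigenvalue μ := by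
  obtain ⟨α, hα⟩ := mem_span_singleton.mp hx
  have hv : x + (α / μ) • z ≠ 0 := fun h0 =>
    hxz (mem_span_singleton.mpr ⟨-(α / μ), by rw [neg_smul, neg_eq_iff_add_eq_zero, add_comm, h0]⟩)
  refine End.hasEigenvalue_of_hasEigenvector (x := x + (α / μ) • z) ⟨?_, hv⟩
  rw [End.mem_genEigenspace_one, map_add, map_smul, hz, smul_zero, add_zero, smul_add, smul_smul,
    mul_div_cancel₀ _ hμ, hα, add_sub_cancel]

theorem Module.Basis.lie_eq_sum_repr_smul_lie {ι F L : Type*} [Fintype ι] [CommRing F]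
    [LieRing L] [LieAlgebra F L] (b : Basis ι F L) (x y : L) :
    ⁅x, y⁆ = ∑ p, b.repr x p • ⁅b p, y⁆ := by
  conv_lhs => rw [← b.sum_repr x]
  simp only [sum_lie, smul_lie]

namespace TwIdx

abbrev z (k : ℕ) : TwIdx k := Sum.inl ()
abbrev u (k : ℕ) : TwIdx k := Sum.inr (Sum.inl ())
abbrev e {k : ℕ} (i : Fin k) (s : Bool) : TwIdx k := Sum.inr (Sum.inr (i, s))

end TwIdx

open TwIdx

theorem not_twPair_z {k : ℕ} (p : TwIdx k) : ¬TwPair p (z k) := by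
  rintro ⟨i, s, ⟨-, h⟩ | ⟨-, h⟩ | ⟨-, h⟩⟩ <;> cases h

theorem TwPair.eq_u_or_eq_e {k : ℕ} {p : TwIdx k} {i : Fin k} {s : Bool}
    (hp : TwPair p (e i s)) : p = u k ∨ p = e i (!s) := by
  obtain ⟨j, t, ⟨rfl, h⟩ | ⟨rfl, -⟩ | ⟨-, h⟩⟩ := hp
  · simp only [Sum.inr.injEq, Prod.mk.injEq] at h
    obtain ⟨rfl, rfl⟩ := h
    simp
  · exact .inl rfl
  · cases h

structure IsTwistedHeisenbergBasis {F L : Type*} [Field F] [LieRing L] [LieAlgebra F L] {k : ℕ}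
    (lam : Fin k → F) (b : Basis (TwIdx k) F L) : Prop where
  lie_e_f : ∀ i : Fin k, ⁅b (e i false), b (e i true)⁆ = lam i • b (z k)
  lie_u_e : ∀ i : Fin k, ⁅b (u k), b (e i false)⁆ = lam i • b (e i true)
  lie_u_f : ∀ i : Fin k, ⁅b (u k), b (e i true)⁆ = lam i • b (e i false)
  lie_eq_zero : ∀ p q : TwIdx k, ¬TwPair p q → ⁅b p, b q⁆ = 0

namespace IsTwistedHeisenbergBasis

variable {F L : Type*} [Field F] [LieRing L] [LieAlgebra F L] {k : ℕ}
  {lam : Fin k → F} {b : Basis (TwIdx k) F L}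

theorem lie_basis_z (H : IsTwistedHeisenbergBasis lam b) (x : L) : ⁅x, b (z k)⁆ = 0 := by
  simp [b.lie_eq_sum_repr_smul_lie x, H.lie_eq_zero _ _ (not_twPair_z _)]

theorem lie_u_basis_e (H : IsTwistedHeisenbergBasis lam b) (i : Fin k) (s : Bool) :
    ⁅b (u k), b (e i s)⁆ = lam i • b (e i (!s)) := by
  cases s
  · exact H.lie_u_e i
  · exact H.lie_u_f i

theorem lie_basis_e_partner_mem_span_z (H : IsTwistedHeisenbergBasis lam b) (i : Fin k) (s : Bool) :
    ⁅b (e i (!s)), b (e i s)⁆ ∈ F ∙ b (z k) := by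
  cases s
  · rw [Bool.not_false, ← lie_skew, H.lie_e_f, ← smul_neg]
    exact smul_mem _ _ (neg_mem (mem_span_singleton_self _))
  · rw [Bool.not_true, H.lie_e_f]
    exact smul_mem _ _ (mem_span_singleton_self _)

theorem lie_basis_e_sub_mem_span_z (H : IsTwistedHeisenbergBasis lam b) (x : L) (i : Fin k) (s : Bool) :
    ⁅x, b (e i s)⁆ - (b.repr x (u k) * lam i) • b (e i (!s)) ∈ F ∙ b (z k) := by
  have hsum : ⁅x, b (e i s)⁆ = b.repr x (u k) • ⁅b (u k), b (e i s)⁆ +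
      b.repr x (e i (!s)) • ⁅b (e i (!s)), b (e i s)⁆ := by
    rw [b.lie_eq_sum_repr_smul_lie]
    refine Fintype.sum_eq_add _ _ (by simp) fun p ⟨hu, he⟩ => ?_
    rw [H.lie_eq_zero _ _ fun hp => (hp.eq_u_or_eq_e).elim hu he, smul_zero]
  rw [hsum, H.lie_u_basis_e, smul_smul, add_sub_cancel_left]
  exact smul_mem _ _ (H.lie_basis_e_partner_mem_span_z i s)

theorem hasEigenvalue_ad (H : IsTwistedHeisenbergBasis lam b) (x : L) {i : Fin k}
    (hi : lam i ≠ 0) (hx : b.repr x (u k) ≠ 0) :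
    (LieAlgebra.ad F L x).HasEigenvalue (b.repr x (u k) * lam i) := by
  refine End.hasEigenvalue_of_sub_smul_mem_span_singleton (mul_ne_zero hx hi)
    (x := b (e i false) + b (e i true)) (H.lie_basis_z x) ?_ ?_
  · rw [mem_span_singleton]
    rintro ⟨a, ha⟩
    simpa [Finsupp.single_apply] using congr(b.repr $ha (e i false))
  · have hf := H.lie_basis_e_sub_mem_span_z x i false
    have ht := H.lie_basis_e_sub_mem_span_z x i true
    rw [Bool.not_false] at hf
    rw [Bool.not_true] at ht
    convert add_mem hf ht using 1
    rw [LieAlgebra.ad_apply, lie_add]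
    module

theorem repr_u_ne_zero_of_notMem_span_lie (H : IsTwistedHeisenbergBasis lam b) (hk : 0 < k) (hlam : ∀ i, lam i ≠ 0)
    {x : L} (hx : x ∉ span F {w : L | ∃ x y : L, ⁅x, y⁆ = w}) : b.repr x (u k) ≠ 0 := by
  have hsmul_lie {w : L} {c : F} (hc : c ≠ 0) {y y' : L} (hw : ⁅y, y'⁆ = c • w) :
      w ∈ span F {w : L | ∃ x y : L, ⁅x, y⁆ = w} := by
    rw [← inv_smul_smul₀ hc w, ← hw]
    exact smul_mem _ _ (subset_span ⟨y, y', rfl⟩)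
  have hbasis : span F (b '' {u k}ᶜ) ≤ span F {w : L | ∃ x y : L, ⁅x, y⁆ = w} := by
    refine span_le.mpr ?_
    rintro _ ⟨p, hp, rfl⟩
    rcases p with ⟨⟩ | ⟨⟩ | ⟨i, s⟩
    · exact hsmul_lie (hlam ⟨0, hk⟩) (H.lie_e_f ⟨0, hk⟩)
    · exact absurd rfl hp
    · exact hsmul_lie (hlam i) (by simpa using H.lie_u_basis_e i (!s))
  intro hxu
  refine hx (hbasis (b.mem_span_image.mpr fun p hp => ?_))
  rintro rfl
  exact Finsupp.mem_support_iff.mp hp hxu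

end IsTwistedHeisenbergBasis

theorem twisted_heisenberg_degree_of_u_finite_order_general
    (F : Type*) [Field F]
    (L : Type*) [LieRing L] [LieAlgebra F L] (k : ℕ) (hk : 0 < k)
    (lam : Fin k → F) (hlam : ∀ i, lam i ≠ 0)
    (b : Module.Basis (TwIdx k) F L)
    (hee : ∀ i : Fin k, ⁅b (Sum.inr (Sum.inr (i, false))), b (Sum.inr (Sum.inr (i, true)))⁆
      = lam i • b (Sum.inl ()))
    (hue : ∀ i : Fin k, ⁅b (Sum.inr (Sum.inl ())), b (Sum.inr (Sum.inr (i, false)))⁆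
      = lam i • b (Sum.inr (Sum.inr (i, true))))
    (huf : ∀ i : Fin k, ⁅b (Sum.inr (Sum.inl ())), b (Sum.inr (Sum.inr (i, true)))⁆
      = lam i • b (Sum.inr (Sum.inr (i, false))))
    (h0 : ∀ p q : TwIdx k, ¬ TwPair p q → ⁅b p, b q⁆ = 0)
    (G : Type*) [AddCommGroup G] [DecidableEq G]
    (Lg : G → Submodule F L) (hint : DirectSum.IsInternal Lg)
    (hgr : ∀ (g h : G) (x y : L), x ∈ Lg g → y ∈ Lg h → ⁅x, y⁆ ∈ Lg (g + h))
    (u' : L) (h : G) (hu' : u' ∈ Lg h)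
    (hnd : u' ∉ Submodule.span F {w : L | ∃ x y : L, ⁅x, y⁆ = w}) :
    IsOfFinAddOrder h := by
  have H : IsTwistedHeisenbergBasis lam b := ⟨hee, hue, huf, h0⟩
  have hc := H.repr_u_ne_zero_of_notMem_span_lie hk hlam hnd
  have : Module.Finite F L := .of_basis b
  by_contra hh
  have hnil : IsNilpotent (LieAlgebra.ad F L u') :=
    isNilpotent_of_not_isOfFinAddOrder hint.submodule_iSupIndep hint.submodule_iSup_eq_top
      (fun g x hx => hgr h g u' x hu' hx) hh
  have hμ := (H.hasEigenvalue_ad u' (hlam ⟨0, hk⟩) hc).isNilpotent_of_isNilpotent hnil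
  exact mul_ne_zero hc (hlam ⟨0, hk⟩) hμ.eq_zero

/-- In any group grading of the twisted Heisenberg algebra `H_n^λ` over an
algebraically closed field of characteristic zero, if `u'` is a nonzero
homogeneous element of degree `h` not lying in the derived subalgebra `[L,L]`,
then `h` has finite (additive) order in the grading group. -/
theorem twisted_heisenberg_degree_of_u_finite_order
    (F : Type*) [Field F] [IsAlgClosed F] [CharZero F]
    (L : Type*) [LieRing L] [LieAlgebra F L] (k : ℕ) (hk : 0 < k)
    (lam : Fin k → F) (hlam : ∀ i, lam i ≠ 0)
    (b : Module.Basis (TwIdx k) F L)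
    (hee : ∀ i : Fin k, ⁅b (Sum.inr (Sum.inr (i, false))), b (Sum.inr (Sum.inr (i, true)))⁆
      = lam i • b (Sum.inl ()))
    (hue : ∀ i : Fin k, ⁅b (Sum.inr (Sum.inl ())), b (Sum.inr (Sum.inr (i, false)))⁆
      = lam i • b (Sum.inr (Sum.inr (i, true))))
    (huf : ∀ i : Fin k, ⁅b (Sum.inr (Sum.inl ())), b (Sum.inr (Sum.inr (i, true)))⁆
      = lam i • b (Sum.inr (Sum.inr (i, false))))
    (h0 : ∀ p q : TwIdx k, ¬ TwPair p q → ⁅b p, b q⁆ = 0)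
    (G : Type*) [AddCommGroup G] [DecidableEq G]
    (Lg : G → Submodule F L) (hint : DirectSum.IsInternal Lg)
    (hgr : ∀ (g h : G) (x y : L), x ∈ Lg g → y ∈ Lg h → ⁅x, y⁆ ∈ Lg (g + h))
    (u' : L) (hu0 : u' ≠ 0) (h : G) (hu' : u' ∈ Lg h)
    (hnd : u' ∉ Submodule.span F {w : L | ∃ x y : L, ⁅x, y⁆ = w}) :
    IsOfFinAddOrder h :=
  twisted_heisenberg_degree_of_u_finite_order_general F L k hk lam hlam b hee hue huf h0 G Lg hint
    hgr u' h hu' hnd
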